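/- arXiv:0805.1032 — 5 statements merged into one kernel-verified Lean document; each statement's English description precedes it below -/
import Mathlib

section
/- Let H be an M-quasisymmetric homeomorphism of [0,1] with H(0)=0 and H(1)=1, and set τ_n = max{(M/(M+1))^n − 1/2^n, 1/2^n − (1/(M+1))^n}. Then for every n ≥ 1, max over 0 ≤ i ≤ 2^n of |H(i/2^n) − i/2^n| is at most the sum of τ_k for k = 1 to n. -/
open Set Finset

/-! Write `E x = H x - x`. If `m` is the midpoint of `[a, b]`, quasisymmetry at `m` places
`H m` at the fraction `θ ∈ [1/(M+1), M/(M+1)]` of the way from `H a` to `H b`, and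
`E m = (1 - θ) E a + θ E b + (θ - 1/2) (b - a)`. So passing from the dyadic points of level `n`
to those of level `n + 1` adds at most `(M/(M+1) - 1/2) / 2^n` to the error, which is at most
`τ (n + 1)` because `p^(n+1) - q^(n+1) ≥ (p - q) q^n` for `0 ≤ q ≤ p`. -/

lemma sub_mul_pow_le_pow_succ_sub_pow_succ {p q : ℝ} (hq : 0 ≤ q) (hqp : q ≤ p) (n : ℕ) :
    (p - q) * q ^ n ≤ p ^ (n + 1) - q ^ (n + 1) := by
  have := mul_le_mul_of_nonneg_left (pow_le_pow_left₀ hq hqp n) (hq.trans hqp)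
  rw [pow_succ, pow_succ]
  linarith

lemma abs_div_add_sub_half_le {M u v : ℝ} (hu : 0 < u) (hv : 0 < v)
    (hlow : M⁻¹ ≤ v / u) (hup : v / u ≤ M) :
    |u / (u + v) - 1 / 2| ≤ M / (M + 1) - 1 / 2 := by
  have hM : 0 < M := (div_pos hv hu).trans_le hup
  have hvu : v ≤ M * u := by rw [div_le_iff₀ hu] at hup; linarith
  have huv : u ≤ M * v := by rwa [le_div_iff₀ hu, inv_mul_le_iff₀ hM] at hlow
  have hθ : u / (u + v) - 1 / 2 = (u - v) / (2 * (u + v)) := by field_simp; ring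
  have hc : M / (M + 1) - 1 / 2 = (M - 1) / (2 * (M + 1)) := by field_simp; ring
  rw [hθ, hc, abs_div, abs_of_pos (by positivity : (0 : ℝ) < 2 * (u + v)),
    div_le_div_iff₀ (by positivity) (by positivity)]
  rcases abs_cases (u - v) with ⟨h, _⟩ | ⟨h, _⟩ <;> rw [h] <;> nlinarith

lemma abs_sub_midpoint_le {a b ya yb θ c S : ℝ} (hab : a ≤ b) (hθ : |θ - 1 / 2| ≤ c)
    (hc : c ≤ 1 / 2) (ha : |ya - a| ≤ S) (hb : |yb - b| ≤ S) :
    |ya + θ * (yb - ya) - (a + b) / 2| ≤ S + c * (b - a) := by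
  obtain ⟨hθ₀, hθ₁⟩ : 0 ≤ θ ∧ θ ≤ 1 := by
    constructor <;> linarith [abs_le.mp (hθ.trans hc)]
  calc |ya + θ * (yb - ya) - (a + b) / 2|
      = |(1 - θ) * (ya - a) + θ * (yb - b) + (θ - 1 / 2) * (b - a)| := by ring_nf
    _ ≤ (1 - θ) * |ya - a| + θ * |yb - b| + |θ - 1 / 2| * (b - a) := by
      refine (abs_add_le _ _).trans (add_le_add ((abs_add_le _ _).trans_eq ?_) ?_)
      · rw [abs_mul, abs_mul, abs_of_nonneg (sub_nonneg.mpr hθ₁), abs_of_nonneg hθ₀]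
      · rw [abs_mul, abs_of_nonneg (sub_nonneg.mpr hab)]
    _ ≤ (1 - θ) * S + θ * S + c * (b - a) := by gcongr
    _ = S + c * (b - a) := by ring

def IsQuasisymmetricOnUnitInterval (M : ℝ) (H : ℝ → ℝ) : Prop :=
  ∀ x t : ℝ, 0 < t → x - t ∈ Icc (0 : ℝ) 1 → x + t ∈ Icc (0 : ℝ) 1 →
    M⁻¹ ≤ (H (x + t) - H x) / (H x - H (x - t)) ∧ (H (x + t) - H x) / (H x - H (x - t)) ≤ M

lemma exists_map_midpoint_eq_of_quasisymmetric {M : ℝ} {H : ℝ → ℝ}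
    (Hmono : StrictMonoOn H (Icc 0 1))
    (hqs : IsQuasisymmetricOnUnitInterval M H)
    {a b : ℝ} (ha : 0 ≤ a) (hab : a < b) (hb : b ≤ 1) :
    ∃ θ, |θ - 1 / 2| ≤ M / (M + 1) - 1 / 2 ∧ H ((a + b) / 2) = H a + θ * (H b - H a) := by
  set m := (a + b) / 2 with hm
  have haI : a ∈ Icc (0 : ℝ) 1 := ⟨ha, by linarith⟩
  have hbI : b ∈ Icc (0 : ℝ) 1 := ⟨by linarith, hb⟩
  have hmI : m ∈ Icc (0 : ℝ) 1 := ⟨by linarith, by linarith⟩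
  have hu : 0 < H m - H a := sub_pos.mpr (Hmono haI hmI (by linarith))
  have hv : 0 < H b - H m := sub_pos.mpr (Hmono hmI hbI (by linarith))
  have hleft : m - (b - a) / 2 = a := by ring
  have hright : m + (b - a) / 2 = b := by ring
  have hq := hqs m ((b - a) / 2) (by linarith) (by rwa [hleft]) (by rwa [hright])
  rw [hleft, hright] at hq
  refine ⟨(H m - H a) / (H m - H a + (H b - H m)),
    abs_div_add_sub_half_le hu hv hq.1 hq.2, ?_⟩
  rw [show H m - H a + (H b - H m) = H b - H a by ring, div_mul_cancel₀ _ (by linarith)]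
  ring

lemma abs_map_dyadic_sub_le_sum {H : ℝ → ℝ} {c : ℝ} {δ : ℕ → ℝ}
    (hc₀ : 0 ≤ c) (hc : c ≤ 1 / 2) (H0 : H 0 = 0) (H1 : H 1 = 1)
    (hmid : ∀ a b : ℝ, 0 ≤ a → a < b → b ≤ 1 →
      ∃ θ, |θ - 1 / 2| ≤ c ∧ H ((a + b) / 2) = H a + θ * (H b - H a))
    (hδ : ∀ n : ℕ, c / 2 ^ n ≤ δ (n + 1)) (n : ℕ) :
    ∀ i : ℕ, i ≤ 2 ^ n →
      |H ((i : ℝ) / 2 ^ n) - (i : ℝ) / 2 ^ n| ≤ ∑ k ∈ Icc 1 n, δ k := by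
  induction n with
  | zero =>
    intro i hi
    interval_cases i <;> simp [H0, H1]
  | succ n ih =>
    intro i hi
    rw [Finset.sum_Icc_succ_top (by omega)]
    have hδ₀ : 0 ≤ δ (n + 1) := (div_nonneg hc₀ (by positivity)).trans (hδ n)
    rcases Nat.even_or_odd' i with ⟨j, rfl | rfl⟩
    · have hx : ((2 * j : ℕ) : ℝ) / 2 ^ (n + 1) = (j : ℝ) / 2 ^ n := by
        push_cast; rw [pow_succ]; field_simp
      rw [hx]
      linarith [ih j (by omega)]
    · have hj : ((j + 1 : ℕ) : ℝ) ≤ 2 ^ n := by exact_mod_cast (by omega : j + 1 ≤ 2 ^ n)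
      have hx : ((2 * j + 1 : ℕ) : ℝ) / 2 ^ (n + 1)
          = ((j : ℝ) / 2 ^ n + (j + 1 : ℕ) / 2 ^ n) / 2 := by
        push_cast; rw [pow_succ]; field_simp; ring
      obtain ⟨θ, hθ, hθmid⟩ := hmid (j / 2 ^ n) ((j + 1 : ℕ) / 2 ^ n) (by positivity)
        (by gcongr; simp) ((div_le_one (by positivity)).mpr hj)
      have hstep :=
        abs_sub_midpoint_le (by gcongr; simp) hθ hc (ih j (by omega)) (ih (j + 1) (by omega))
      have hlen : ((j + 1 : ℕ) : ℝ) / 2 ^ n - j / 2 ^ n = 1 / 2 ^ n := by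
        push_cast; field_simp; ring
      rw [hx, hθmid]
      refine hstep.trans ?_
      rw [hlen, mul_one_div]
      linarith [hδ n]

theorem stmt3_general (M : ℝ) (hM : 1 ≤ M) (H : ℝ → ℝ)
    (Hmono : StrictMonoOn H (Set.Icc (0:ℝ) 1))
    (H0 : H 0 = 0) (H1 : H 1 = 1)
    (hqs : ∀ x t : ℝ, 0 < t → x - t ∈ Set.Icc (0:ℝ) 1 → x + t ∈ Set.Icc (0:ℝ) 1 →
      M⁻¹ ≤ (H (x + t) - H x) / (H x - H (x - t)) ∧
      (H (x + t) - H x) / (H x - H (x - t)) ≤ M)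
    (τ : ℕ → ℝ)
    (hτ : ∀ n : ℕ, τ n = max ((M / (M + 1)) ^ n - 1 / 2 ^ n)
                            (1 / 2 ^ n - (1 / (M + 1)) ^ n)) :
    ∀ n : ℕ, 1 ≤ n → ∀ i : ℕ, i ≤ 2 ^ n →
      |H ((i : ℝ) / 2 ^ n) - (i : ℝ) / 2 ^ n| ≤ ∑ k ∈ Finset.Icc 1 n, τ k := by
  have hhalf : 1 / 2 ≤ M / (M + 1) := by rw [div_le_div_iff₀ two_pos (by linarith)]; linarith
  have hlt1 : M / (M + 1) ≤ 1 := (div_le_one (by linarith)).mpr (by linarith)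
  have hτ_succ (n : ℕ) : (M / (M + 1) - 1 / 2) / 2 ^ n ≤ τ (n + 1) := by
    rw [hτ, div_eq_mul_one_div, ← one_div_pow, ← one_div_pow]
    exact (sub_mul_pow_le_pow_succ_sub_pow_succ (by norm_num) hhalf n).trans (le_max_left _ _)
  intro n _
  exact abs_map_dyadic_sub_le_sum (by linarith) (by linarith) H0 H1
    (fun a b ha hab hb => exists_map_midpoint_eq_of_quasisymmetric Hmono hqs ha hab hb) hτ_succ n

/-- With τ_n = max{(M/(M+1))^n − 1/2^n, 1/2^n − (1/(M+1))^n},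
every M-quasisymmetric homeomorphism H of [0,1] fixing 0 and 1 satisfies, for n ≥ 1,
max_{0 ≤ i ≤ 2^n} |H(i/2^n) − i/2^n| ≤ ∑_{k=1}^n τ_k. -/
theorem stmt3 (M : ℝ) (hM : 1 ≤ M) (H : ℝ → ℝ)
    (Hmono : StrictMonoOn H (Set.Icc (0:ℝ) 1))
    (Hcont : ContinuousOn H (Set.Icc (0:ℝ) 1))
    (H0 : H 0 = 0) (H1 : H 1 = 1)
    (hqs : ∀ x t : ℝ, 0 < t → x - t ∈ Set.Icc (0:ℝ) 1 → x + t ∈ Set.Icc (0:ℝ) 1 →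
      M⁻¹ ≤ (H (x + t) - H x) / (H x - H (x - t)) ∧
      (H (x + t) - H x) / (H x - H (x - t)) ≤ M)
    (τ : ℕ → ℝ)
    (hτ : ∀ n : ℕ, τ n = max ((M / (M + 1)) ^ n - 1 / 2 ^ n)
                            (1 / 2 ^ n - (1 / (M + 1)) ^ n)) :
    ∀ n : ℕ, 1 ≤ n → ∀ i : ℕ, i ≤ 2 ^ n →
      |H ((i : ℝ) / 2 ^ n) - (i : ℝ) / 2 ^ n| ≤ ∑ k ∈ Finset.Icc 1 n, τ k :=
  stmt3_general M hM H Hmono H0 H1 hqs τ hτ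
end

section
/- A quasisymmetric homeomorphism H of ℝ is symmetric (i.e., there is a vanishing function ε with 1/(1+ε(y)) ≤ ρ_H(x,y) ≤ 1+ε(y) for all x and y>0) if and only if there is a vanishing function ε' such that max{|ρ_H(x,y,k) − k|, |ρ_H(x,−y,k) − k|} ≤ ε'(y) for all real x, all y > 0, and all 0 < k ≤ 1. -/
open Set Filter

/-- A bounded positive function defined for y > 0 which tends to 0 as y → 0⁺. -/
def Vanishing (ε : ℝ → ℝ) : Prop :=
  (∀ y : ℝ, 0 < y → 0 < ε y) ∧ (∃ C : ℝ, ∀ y : ℝ, 0 < y → ε y ≤ C) ∧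
    Tendsto ε (nhdsWithin 0 (Ioi 0)) (nhds 0)

/-!
Symmetry with a vanishing `ε` says that at scales `≤ y` adjacent increments of `H` agree up to a
factor `1 + δ`, where `δ = sup ε((0, y])`. Applied to `t ↦ H (x + t y)` and propagated by repeated
bisection, this keeps `H` within relative error `(1 + δ) ^ n - 1` of its affine interpolation on
`[x, x + y]` at the dyadic points of level `n`; monotonicity handles the points in between up to
the mesh `2⁻ⁿ`, and optimising over `n` gives an error `dyadicError δ` that vanishes with `δ`.
Conversely, `k = 1` gives `|ρ_H(x, y) - 1| ≤ ε'(y)`, and the bound `ρ_H ≥ 1 / M` takes care of the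
scales at which `ε'(y)` is large.
-/

open Topology

namespace Vanishing

theorem const_mul {ε : ℝ → ℝ} (hε : Vanishing ε) {c : ℝ} (hc : 0 < c) :
    Vanishing fun y => c * ε y := by
  obtain ⟨hpos, ⟨C, hC⟩, htend⟩ := hε
  refine ⟨fun y hy => mul_pos hc (hpos y hy), ⟨c * C, fun y hy => ?_⟩, ?_⟩
  · exact mul_le_mul_of_nonneg_left (hC y hy) hc.le
  · simpa using htend.const_mul c

theorem exists_monotone_majorant {ε : ℝ → ℝ} (hε : Vanishing ε) :
    ∃ η : ℝ → ℝ, Vanishing η ∧ ∀ t y, 0 < t → t ≤ y → ε t ≤ η y := by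
  obtain ⟨hpos, ⟨C, hC⟩, htend⟩ := hε
  have hbdd : ∀ y, BddAbove (ε '' Ioc 0 y) := fun y =>
    ⟨C, by rintro _ ⟨t, ht, rfl⟩; exact hC t ht.1⟩
  have hle : ∀ t y, 0 < t → t ≤ y → ε t ≤ sSup (ε '' Ioc 0 y) := fun t y ht hty =>
    le_csSup (hbdd y) ⟨t, ⟨ht, hty⟩, rfl⟩
  have hsup_le : ∀ y a, 0 < y → (∀ t ∈ Ioc 0 y, ε t ≤ a) → sSup (ε '' Ioc 0 y) ≤ a :=
    fun y a hy h => csSup_le ⟨ε y, y, ⟨hy, le_rfl⟩, rfl⟩ (by rintro _ ⟨t, ht, rfl⟩; exact h t ht)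
  refine ⟨fun y => sSup (ε '' Ioc 0 y), ⟨fun y hy => (hpos y hy).trans_le (hle y y hy le_rfl),
    ⟨C, fun y hy => hsup_le y C hy fun t ht => hC t ht.1⟩, ?_⟩, hle⟩
  refine tendsto_order.2 ⟨fun a ha => ?_, fun a ha => ?_⟩
  · filter_upwards [self_mem_nhdsWithin] with y hy
    exact ha.trans ((hpos y hy).trans_le (hle y y hy le_rfl))
  · obtain ⟨y₀, hy₀, hsmall⟩ := mem_nhdsGT_iff_exists_Ioo_subset.1
      (htend.eventually (gt_mem_nhds (half_pos ha)))
    filter_upwards [Ioo_mem_nhdsGT hy₀] with y hy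
    refine (hsup_le y (a / 2) hy.1 fun t ht => (hsmall ⟨ht.1, ht.2.trans_lt hy.2⟩).le).trans_lt ?_
    exact half_lt_self ha

end Vanishing

theorem le_mul_of_ratio_bounds {p q e δ : ℝ} (hp : 0 < p) (hq : 0 < q) (he : 0 ≤ e) (heδ : e ≤ δ)
    (hlow : 1 / (1 + e) ≤ p / q) (hup : p / q ≤ 1 + e) : p ≤ (1 + δ) * q ∧ q ≤ (1 + δ) * p := by
  rw [div_le_div_iff₀ (by linarith) hq] at hlow
  rw [div_le_iff₀ hq] at hup
  constructor <;> nlinarith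

theorem le_ratio_and_ratio_le_of_abs_sub_one_le {ρ e M : ℝ} (hM : 1 ≤ M) (he : 0 ≤ e)
    (hρM : 1 / M ≤ ρ) (hρ : |ρ - 1| ≤ e) : 1 / (1 + 2 * M * e) ≤ ρ ∧ ρ ≤ 1 + 2 * M * e := by
  rw [abs_le] at hρ
  rw [div_le_iff₀ (by linarith)] at hρM
  refine ⟨(div_le_iff₀ (by positivity)).2 ?_, by nlinarith⟩
  rcases le_or_gt e (1 / 2) with h | h <;> nlinarith

theorem abs_midpoint_sub_le {fa fm fb la lb E δ : ℝ} (hδ : 0 ≤ δ)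
    (h₁ : fb - fm ≤ (1 + δ) * (fm - fa)) (h₂ : fm - fa ≤ (1 + δ) * (fb - fm))
    (ha : |fa - la| ≤ E) (hb : |fb - lb| ≤ E) :
    |fm - (la + lb) / 2| ≤ E + δ / 4 * (2 * E + (lb - la)) := by
  have hpq : |(fm - fa) - (fb - fm)| ≤ δ / 2 * (fb - fa) := by
    rw [abs_le]; constructor <;> rcases le_total (fb - fm) (fm - fa) with h | h <;> nlinarith
  rw [abs_le] at ha hb hpq ⊢
  constructor <;> nlinarith

noncomputable def dyadicError (δ : ℝ) : ℝ := ⨅ n : ℕ, ((1 + δ) ^ n - 1 + (1 / 2) ^ n)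

section dyadicError

variable {δ : ℝ}

theorem dyadicError_term_nonneg (hδ : 0 ≤ δ) (n : ℕ) : 0 ≤ (1 + δ) ^ n - 1 + (1 / 2) ^ n := by
  have : 1 ≤ (1 + δ) ^ n := one_le_pow₀ (by linarith)
  positivity

theorem dyadicError_le (hδ : 0 ≤ δ) (n : ℕ) : dyadicError δ ≤ (1 + δ) ^ n - 1 + (1 / 2) ^ n :=
  ciInf_le ⟨0, by rintro _ ⟨m, rfl⟩; exact dyadicError_term_nonneg hδ m⟩ n

theorem dyadicError_nonneg (hδ : 0 ≤ δ) : 0 ≤ dyadicError δ :=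
  le_ciInf (dyadicError_term_nonneg hδ)

theorem dyadicError_le_one (hδ : 0 ≤ δ) : dyadicError δ ≤ 1 := by
  simpa using dyadicError_le hδ 0

theorem tendsto_dyadicError : Tendsto dyadicError (𝓝[≥] 0) (𝓝 0) := by
  refine tendsto_order.2 ⟨fun a ha => ?_, fun a ha => ?_⟩
  · filter_upwards [self_mem_nhdsWithin] with δ hδ using ha.trans_le (dyadicError_nonneg hδ)
  · obtain ⟨n, hn⟩ := exists_pow_lt_of_lt_one ha one_half_lt_one
    have hcont : Continuous fun δ : ℝ => (1 + δ) ^ n - 1 + (1 / 2) ^ n := by fun_prop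
    have hlt : ∀ᶠ δ in 𝓝 0, (1 + δ) ^ n - 1 + (1 / 2) ^ n < a :=
      hcont.continuousAt.eventually_lt continuousAt_const (by simpa using hn)
    filter_upwards [nhdsWithin_le_nhds hlt, self_mem_nhdsWithin] with δ h hδ
    exact (dyadicError_le hδ n).trans_lt h

end dyadicError

/-- `1 / (1 + δ) ≤ ρ_H(x, t) ≤ 1 + δ` for all `x` and `0 < t ≤ y`, without the division. -/
def AlmostSymmetricUpTo (H : ℝ → ℝ) (δ y : ℝ) : Prop :=
  ∀ x t, 0 < t → t ≤ y →
    H (x + t) - H x ≤ (1 + δ) * (H x - H (x - t)) ∧ H x - H (x - t) ≤ (1 + δ) * (H (x + t) - H x)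

namespace AlmostSymmetricUpTo

variable {H : ℝ → ℝ} {δ y : ℝ}

theorem reflect (h : AlmostSymmetricUpTo H δ y) : AlmostSymmetricUpTo (fun u => -H (-u)) δ y := by
  intro x t ht hty
  obtain ⟨h₁, h₂⟩ := h (-x) t ht hty
  dsimp only
  rw [show -(x + t) = -x - t by ring, show -(x - t) = -x + t by ring]
  constructor <;> linarith

theorem comp_affine (h : AlmostSymmetricUpTo H δ y) (hy : 0 < y) (x : ℝ) :
    AlmostSymmetricUpTo (fun t => H (x + t * y)) δ 1 := by
  intro c t ht ht1
  have := h (x + c * y) (t * y) (mul_pos ht hy) (mul_le_of_le_one_left hy.le ht1)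
  simpa only [add_mul, sub_mul, add_assoc, add_sub_assoc] using this

theorem abs_dyadic_sub_le {f : ℝ → ℝ} (hf : AlmostSymmetricUpTo f δ 1) (hmono : Monotone f)
    (hδ : 0 ≤ δ) (n : ℕ) : ∀ j : ℕ, j ≤ 2 ^ n →
      |f (j / 2 ^ n) - (f 0 + j / 2 ^ n * (f 1 - f 0))| ≤ ((1 + δ) ^ n - 1) * (f 1 - f 0) := by
  have hs : 0 ≤ f 1 - f 0 := sub_nonneg.2 (hmono zero_le_one)
  induction n with
  | zero =>
    intro j hj
    interval_cases j <;> simp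
  | succ n ih =>
    intro j hj
    have hP : 1 ≤ (1 + δ) ^ n := one_le_pow₀ (by linarith)
    have h2n : (0 : ℝ) < 2 ^ n := by positivity
    obtain ⟨i, rfl | rfl⟩ := Nat.even_or_odd' j
    · have hi : ((2 * i : ℕ) : ℝ) / 2 ^ (n + 1) = i / 2 ^ n := by
        push_cast; rw [pow_succ]; field_simp
      rw [hi]
      refine (ih i (by omega)).trans (mul_le_mul_of_nonneg_right ?_ hs)
      rw [pow_succ]; nlinarith
    · have hi : i + 1 ≤ 2 ^ n := by rw [pow_succ] at hj; omega
      have hstep := hf ((2 * i + 1) / 2 ^ (n + 1)) (1 / 2 ^ (n + 1)) (by positivity)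
        (by rw [div_le_one (by positivity)]; exact one_le_pow₀ one_le_two)
      have ha : ((2 * i + 1) / 2 ^ (n + 1) - 1 / 2 ^ (n + 1) : ℝ) = i / 2 ^ n := by
        rw [pow_succ]; field_simp; ring
      have hb : ((2 * i + 1) / 2 ^ (n + 1) + 1 / 2 ^ (n + 1) : ℝ) = ((i + 1 : ℕ) : ℝ) / 2 ^ n := by
        push_cast; rw [pow_succ]; field_simp; ring
      rw [ha, hb] at hstep
      have hmid := abs_midpoint_sub_le hδ hstep.1 hstep.2 (ih i (by omega)) (ih (i + 1) hi)
      push_cast at hmid ⊢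
      have hsum : (f 0 + i / 2 ^ n * (f 1 - f 0) + (f 0 + (i + 1) / 2 ^ n * (f 1 - f 0))) / 2 =
          f 0 + (2 * i + 1) / 2 ^ (n + 1) * (f 1 - f 0) := by
        rw [pow_succ]; field_simp; ring
      have hdiff : f 0 + (i + 1) / 2 ^ n * (f 1 - f 0) - (f 0 + i / 2 ^ n * (f 1 - f 0)) =
          1 / 2 ^ n * (f 1 - f 0) := by
        field_simp; ring
      rw [hsum, hdiff] at hmid
      refine hmid.trans ?_
      have h2inv : 1 / (2 : ℝ) ^ n ≤ 1 := by rw [div_le_one h2n]; exact one_le_pow₀ one_le_two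
      rw [pow_succ]
      nlinarith [mul_le_mul_of_nonneg_right h2inv (mul_nonneg hδ hs), mul_nonneg hδ hs,
        mul_nonneg (mul_nonneg hδ hs) (sub_nonneg.2 hP)]

theorem abs_sub_le_dyadicError {f : ℝ → ℝ} (hf : AlmostSymmetricUpTo f δ 1) (hmono : Monotone f)
    (hδ : 0 ≤ δ) {k : ℝ} (hk0 : 0 ≤ k) (hk1 : k ≤ 1) :
    |f k - (f 0 + k * (f 1 - f 0))| ≤ dyadicError δ * (f 1 - f 0) := by
  have hs : 0 ≤ f 1 - f 0 := sub_nonneg.2 (hmono zero_le_one)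
  rw [dyadicError, Real.iInf_mul_of_nonneg hs]
  refine le_ciInf fun n => ?_
  have h2n : (0 : ℝ) < 2 ^ n := by positivity
  have hk2n : 0 ≤ k * 2 ^ n := by positivity
  have hkn : k * 2 ^ n ≤ 2 ^ n := mul_le_of_le_one_left h2n.le hk1
  have hmesh : (1 / 2 : ℝ) ^ n = 1 / 2 ^ n := one_div_pow 2 n
  have ha := hf.abs_dyadic_sub_le hmono hδ n ⌊k * 2 ^ n⌋₊
    (Nat.floor_le_of_le (by exact_mod_cast hkn))
  have hb := hf.abs_dyadic_sub_le hmono hδ n ⌈k * 2 ^ n⌉₊ (Nat.ceil_le.2 (by exact_mod_cast hkn))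
  set a : ℝ := ⌊k * 2 ^ n⌋₊ / 2 ^ n
  set b : ℝ := ⌈k * 2 ^ n⌉₊ / 2 ^ n
  have hak : a ≤ k := by rw [div_le_iff₀ h2n]; exact Nat.floor_le hk2n
  have hkb : k ≤ b := by rw [le_div_iff₀ h2n]; exact Nat.le_ceil _
  have hka : k - a ≤ (1 / 2) ^ n := by
    rw [hmesh, show k - a = (k * 2 ^ n - ⌊k * 2 ^ n⌋₊) / 2 ^ n by
      rw [sub_div, mul_div_cancel_right₀ _ h2n.ne'], div_le_div_iff_of_pos_right h2n]
    linarith [Nat.lt_floor_add_one (k * 2 ^ n)]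
  have hbk : b - k ≤ (1 / 2) ^ n := by
    rw [hmesh, show b - k = (⌈k * 2 ^ n⌉₊ - k * 2 ^ n) / 2 ^ n by
      rw [sub_div, mul_div_cancel_right₀ _ h2n.ne'], div_le_div_iff_of_pos_right h2n]
    linarith [Nat.ceil_lt_add_one hk2n]
  have hfa := hmono hak
  have hfb := hmono hkb
  rw [abs_le] at ha hb ⊢
  constructor <;> nlinarith [mul_le_mul_of_nonneg_right hka hs, mul_le_mul_of_nonneg_right hbk hs]

theorem of_ratio_bounds (hH : StrictMono H) {ε : ℝ → ℝ} (hεpos : ∀ t, 0 < t → 0 < ε t)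
    (hε : ∀ x t, 0 < t → 1 / (1 + ε t) ≤ (H (x + t) - H x) / (H x - H (x - t)) ∧
      (H (x + t) - H x) / (H x - H (x - t)) ≤ 1 + ε t)
    (hεδ : ∀ t, 0 < t → t ≤ y → ε t ≤ δ) : AlmostSymmetricUpTo H δ y := fun x t ht hty =>
  le_mul_of_ratio_bounds (sub_pos.2 (hH (by linarith))) (sub_pos.2 (hH (by linarith)))
    (hεpos t ht).le (hεδ t ht hty) (hε x t ht).1 (hε x t ht).2

theorem abs_ratio_sub_le (h : AlmostSymmetricUpTo H δ y) (hH : StrictMono H) (hδ : 0 ≤ δ)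
    (hy : 0 < y) (x : ℝ) {k : ℝ} (hk0 : 0 ≤ k) (hk1 : k ≤ 1) :
    |(H (x + k * y) - H x) / (H x - H (x - y)) - k| ≤ (dyadicError δ + δ) * (1 + δ) := by
  have hd : 0 < H x - H (x - y) := sub_pos.2 (hH (by linarith))
  have hlin := (h.comp_affine hy x).abs_sub_le_dyadicError
    (fun a b hab => hH.monotone (by nlinarith)) hδ hk0 hk1
  simp only [zero_mul, add_zero, one_mul] at hlin
  obtain ⟨hsd, hds⟩ := h x y hy le_rfl
  have hΦ := dyadicError_nonneg hδ
  have hdiff : |(H (x + y) - H x) - (H x - H (x - y))| ≤ δ * (1 + δ) * (H x - H (x - y)) :=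
    abs_le.2 ⟨by nlinarith [mul_le_mul_of_nonneg_left hsd hδ],
      by nlinarith [mul_nonneg (mul_nonneg hδ hδ) hd.le]⟩
  have hkdiff :
      |k * ((H (x + y) - H x) - (H x - H (x - y)))| ≤ δ * (1 + δ) * (H x - H (x - y)) := by
    rw [abs_mul, abs_of_nonneg hk0]
    exact (mul_le_of_le_one_left (abs_nonneg _) hk1).trans hdiff
  rw [div_sub' hd.ne', abs_div, abs_of_pos hd, div_le_iff₀ hd]
  calc |H (x + k * y) - H x - (H x - H (x - y)) * k|
      = |(H (x + k * y) - (H x + k * (H (x + y) - H x))) +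
          k * ((H (x + y) - H x) - (H x - H (x - y)))| := by ring_nf
    _ ≤ dyadicError δ * (H (x + y) - H x) + δ * (1 + δ) * (H x - H (x - y)) :=
      (abs_add_le _ _).trans (add_le_add hlin hkdiff)
    _ ≤ (dyadicError δ + δ) * (1 + δ) * (H x - H (x - y)) := by
      nlinarith [mul_le_mul_of_nonneg_left hsd hΦ]

theorem abs_ratio_neg_sub_le (h : AlmostSymmetricUpTo H δ y) (hH : StrictMono H) (hδ : 0 ≤ δ)
    (hy : 0 < y) (x : ℝ) {k : ℝ} (hk0 : 0 ≤ k) (hk1 : k ≤ 1) :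
    |(H (x + k * (-y)) - H x) / (H x - H (x - (-y))) - k| ≤ (dyadicError δ + δ) * (1 + δ) := by
  -- `u ↦ -H (-u)` at `-x` sees the left side of `x` as its right side.
  have := h.reflect.abs_ratio_sub_le (fun a b hab => neg_lt_neg (hH (neg_lt_neg hab))) hδ hy (-x)
    hk0 hk1
  rwa [show -(-x + k * y) = x + k * -y by ring, neg_neg, show -(-x - y) = x - -y by ring,
    neg_sub_neg, neg_sub_neg, ← neg_div_neg_eq, neg_sub, neg_sub] at this

end AlmostSymmetricUpTo

theorem Vanishing.dyadicError_add {η : ℝ → ℝ} (hη : Vanishing η) :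
    Vanishing fun y => (dyadicError (η y) + η y) * (1 + η y) := by
  obtain ⟨hpos, ⟨C, hC⟩, htend⟩ := hη
  refine ⟨fun y hy => ?_, ⟨(1 + C) * (1 + C), fun y hy => ?_⟩, ?_⟩
  · have := dyadicError_nonneg (hpos y hy).le
    have := hpos y hy
    positivity
  · have := dyadicError_le_one (hpos y hy).le
    have := dyadicError_nonneg (hpos y hy).le
    have := hpos y hy
    have := hC y hy
    exact mul_le_mul (by linarith) (by linarith) (by linarith) (by linarith)
  · have hη' : Tendsto η (𝓝[>] 0) (𝓝[≥] 0) :=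
      tendsto_nhdsWithin_iff.2 ⟨htend, eventually_nhdsWithin_of_forall fun y hy => (hpos y hy).le⟩
    simpa using ((tendsto_dyadicError.comp hη').add htend).mul (tendsto_const_nhds.add htend)

theorem stmt6_general (H : ℝ → ℝ) (Hmono : StrictMono H)
    (M : ℝ) (hM : 1 ≤ M)
    (hqs : ∀ x y : ℝ, 0 < y →
      1 / M ≤ (H (x + y) - H x) / (H x - H (x - y)) ∧
      (H (x + y) - H x) / (H x - H (x - y)) ≤ M) :
    (∃ ε : ℝ → ℝ, Vanishing ε ∧ ∀ x y : ℝ, 0 < y →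
        1 / (1 + ε y) ≤ (H (x + y) - H x) / (H x - H (x - y)) ∧
        (H (x + y) - H x) / (H x - H (x - y)) ≤ 1 + ε y) ↔
    (∃ ε' : ℝ → ℝ, Vanishing ε' ∧ ∀ x y : ℝ, 0 < y → ∀ k : ℝ, 0 < k → k ≤ 1 →
        max |(H (x + k * y) - H x) / (H x - H (x - y)) - k|
            |(H (x + k * (-y)) - H x) / (H x - H (x - (-y))) - k| ≤ ε' y) := by
  constructor
  · rintro ⟨ε, hε, hρ⟩
    obtain ⟨η, hη, hεη⟩ := hε.exists_monotone_majorant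
    refine ⟨_, hη.dyadicError_add, fun x y hy k hk0 hk1 => ?_⟩
    have hsym : AlmostSymmetricUpTo H (η y) y :=
      .of_ratio_bounds Hmono hε.1 hρ fun t => hεη t y
    have hδ := (hη.1 y hy).le
    exact max_le (hsym.abs_ratio_sub_le Hmono hδ hy x hk0.le hk1)
      (hsym.abs_ratio_neg_sub_le Hmono hδ hy x hk0.le hk1)
  · rintro ⟨ε', hε', hk⟩
    refine ⟨_, hε'.const_mul (by positivity : (0 : ℝ) < 2 * M), fun x y hy => ?_⟩
    have hρ := (le_max_left _ _).trans (hk x y hy 1 one_pos le_rfl)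
    simp only [one_mul] at hρ
    exact le_ratio_and_ratio_le_of_abs_sub_one_le hM (hε'.1 y hy).le (hqs x y hy).1 hρ

/-- A quasisymmetric homeomorphism H of ℝ is symmetric iff there is a
vanishing function ε' with max{|ρ_H(x,y,k) − k|, |ρ_H(x,−y,k) − k|} ≤ ε'(y)
for all x, y > 0, 0 < k ≤ 1. -/
theorem stmt6 (H : ℝ → ℝ) (Hmono : StrictMono H) (Hcont : Continuous H)
    (Hsurj : Function.Surjective H)
    (M : ℝ) (hM : 1 ≤ M)
    (hqs : ∀ x y : ℝ, 0 < y →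
      1 / M ≤ (H (x + y) - H x) / (H x - H (x - y)) ∧
      (H (x + y) - H x) / (H x - H (x - y)) ≤ M) :
    (∃ ε : ℝ → ℝ, Vanishing ε ∧ ∀ x y : ℝ, 0 < y →
        1 / (1 + ε y) ≤ (H (x + y) - H x) / (H x - H (x - y)) ∧
        (H (x + y) - H x) / (H x - H (x - y)) ≤ 1 + ε y) ↔
    (∃ ε' : ℝ → ℝ, Vanishing ε' ∧ ∀ x y : ℝ, 0 < y → ∀ k : ℝ, 0 < k → k ≤ 1 →
        max |(H (x + k * y) - H x) / (H x - H (x - y)) - k|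
            |(H (x + k * (-y)) - H x) / (H x - H (x - (-y))) - k| ≤ ε' y) :=
  stmt6_general H Hmono M hM hqs
end

section
/- Let F be an increasing homeomorphism of ℝ with F(0)=0, F(x+1) = F(x) + m for an integer m > 1, and suppose F is UAA: there is a constant M ≥ 1 with 1/M ≤ (F^{−n}(x+y) − F^{−n}(x))/(F^{−n}(x) − F^{−n}(x−y)) ≤ M for all n ≥ 1, x ∈ ℝ, y > 0. Then there exists a homeomorphism H of ℝ with H(0)=0, H(x+1) = H(x)+1, and H(mx) = F(H(x)) for all x, defined on the dense set {j/m^n} by H(j/m^n) = a_{j,n} where F^n(a_{j,n}) = j. -/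
/-!
Let `g = F⁻¹`. The points `a_{j,n} = gⁿ(j)` are ordered exactly like the `m`-adic rationals
`j / mⁿ`, because `g^{n+k}(j mᵏ) = gⁿ(j)`. The UAA bound makes adjacent gaps
`[a_{j-1,n}, a_{j,n}]`, `[a_{j,n}, a_{j+1,n}]` comparable within the factor `M`; since every gap
of level `n` is cut into `m ≥ 2` gaps of level `n + 1`, each of these is at most `M / (M + 1)`
times its parent. Hence the points `a_{j,n}` are dense, so `j / mⁿ ↦ a_{j,n}` is an order
isomorphism between dense subsets of `ℝ`; it extends to an order isomorphism `H` of `ℝ`, and the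
functional equations, which hold on the `m`-adic rationals, extend by continuity.
-/

open Set Function

section SSupExtension

variable {ι α β : Type*} [ConditionallyCompleteLinearOrder α] [ConditionallyCompleteLinearOrder β]

noncomputable def sSupExtension (p : ι → α) (q : ι → β) (y : α) : β :=
  sSup (q '' {i | p i ≤ y})

variable {p : ι → α} {q : ι → β}

theorem sSupExtension_apply (hpq : ∀ i j, p i ≤ p j → q i ≤ q j) (i : ι) :
    sSupExtension p q (p i) = q i := by
  have hle : ∀ b ∈ q '' {j | p j ≤ p i}, b ≤ q i := by
    rintro _ ⟨j, hj, rfl⟩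
    exact hpq j i hj
  exact le_antisymm (csSup_le ⟨q i, i, le_rfl, rfl⟩ hle) (le_csSup ⟨q i, hle⟩ ⟨i, le_rfl, rfl⟩)

theorem sSupExtension_monotone (hpq : ∀ i j, p i ≤ p j → q i ≤ q j)
    (hbot : ∀ y, ∃ i, p i ≤ y) (htop : ∀ y, ∃ i, y ≤ p i) : Monotone (sSupExtension p q) := by
  intro y y' hyy'
  obtain ⟨i, hi⟩ := hbot y
  obtain ⟨i', hi'⟩ := htop y'
  refine csSup_le_csSup ⟨q i', ?_⟩ ⟨q i, i, hi, rfl⟩ (image_mono fun j hj => le_trans hj hyy')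
  rintro _ ⟨j, hj, rfl⟩
  exact hpq j i' (le_trans hj hi')

end SSupExtension

theorem Monotone.eq_id_of_eqOn_dense {α : Type*} [LinearOrder α] [TopologicalSpace α]
    [OrderTopology α] [DenselyOrdered α] {f : α → α} (hf : Monotone f) {s : Set α} (hs : Dense s)
    (hfs : EqOn f id s) : f = id := by
  funext y
  by_contra hne
  rcases lt_or_gt_of_ne hne with hlt | hlt
  · obtain ⟨z, hzs, hfyz, hzy⟩ := hs.exists_between hlt
    exact (hfs hzs ▸ hf hzy.le).not_gt hfyz
  · obtain ⟨z, hzs, hyz, hzfy⟩ := hs.exists_between hlt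
    exact (hfs hzs ▸ hf hyz.le).not_gt hzfy

theorem DenseRange.exists_apply_le {ι γ : Type*} [LinearOrder γ] [TopologicalSpace γ]
    [OrderTopology γ] [NoMinOrder γ] {r : ι → γ} (hr : DenseRange r) (y : γ) : ∃ i, r i ≤ y := by
  obtain ⟨_, ⟨i, rfl⟩, hi⟩ := Dense.exists_le hr y
  exact ⟨i, hi⟩

theorem DenseRange.exists_le_apply {ι γ : Type*} [LinearOrder γ] [TopologicalSpace γ]
    [OrderTopology γ] [NoMaxOrder γ] {r : ι → γ} (hr : DenseRange r) (y : γ) : ∃ i, y ≤ r i := by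
  obtain ⟨_, ⟨i, rfl⟩, hi⟩ := Dense.exists_ge hr y
  exact ⟨i, hi⟩

theorem exists_orderIso_apply_eq_of_denseRange {ι α β : Type*}
    [ConditionallyCompleteLinearOrder α] [TopologicalSpace α] [OrderTopology α] [DenselyOrdered α]
    [NoMinOrder α] [NoMaxOrder α]
    [ConditionallyCompleteLinearOrder β] [TopologicalSpace β] [OrderTopology β] [DenselyOrdered β]
    [NoMinOrder β] [NoMaxOrder β]
    {p : ι → α} {q : ι → β} (hpq : ∀ i j, p i ≤ p j ↔ q i ≤ q j) (hp : DenseRange p)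
    (hq : DenseRange q) : ∃ e : α ≃o β, ∀ i, e (p i) = q i := by
  have hG := sSupExtension_monotone (fun i j => (hpq i j).1) hp.exists_apply_le hp.exists_le_apply
  have hG' := sSupExtension_monotone (fun i j => (hpq i j).2) hq.exists_apply_le hq.exists_le_apply
  have hG'G := (hG'.comp hG).eq_id_of_eqOn_dense hp <| by
    rintro _ ⟨i, rfl⟩
    simp only [comp_apply, sSupExtension_apply (fun i j => (hpq i j).1),
      sSupExtension_apply (fun i j => (hpq i j).2), id]
  have hGG' := (hG.comp hG').eq_id_of_eqOn_dense hq <| by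
    rintro _ ⟨i, rfl⟩
    simp only [comp_apply, sSupExtension_apply (fun i j => (hpq i j).1),
      sSupExtension_apply (fun i j => (hpq i j).2), id]
  exact ⟨Equiv.toOrderIso ⟨_, _, congrFun hG'G, congrFun hGG'⟩ hG hG',
    sSupExtension_apply fun i j => (hpq i j).1⟩

theorem Monotone.exists_lt_le_add {a : ℤ → ℝ} (ha : Monotone a) {u δ : ℝ}
    (hbot : ∃ j, a j ≤ u) (htop : ∃ j, u < a j) (hgap : ∀ j, a (j + 1) - a j ≤ δ) :
    ∃ j, u < a j ∧ a j ≤ u + δ := by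
  obtain ⟨j₀, hj₀⟩ := hbot
  have hbdd : ∃ b, ∀ j, u < a j → b ≤ j :=
    ⟨j₀, fun j hj => not_lt.1 fun hlt => (ha hlt.le).not_gt (hj₀.trans_lt hj)⟩
  obtain ⟨j, hj, hmin⟩ := Int.exists_least_of_bdd hbdd htop
  have hprev : a (j - 1) ≤ u := not_lt.1 fun h => by linarith [hmin _ h]
  have := hgap (j - 1)
  rw [sub_add_cancel] at this
  exact ⟨j, hj, by linarith⟩

theorem gap_le_mul_of_refinement {m : ℕ} (hm : 1 < m) {M δ : ℝ} (hM : 0 ≤ M) {a b : ℤ → ℝ}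
    (ha : Monotone a) (hab : ∀ q, a (m * q) = b q)
    (hadj : ∀ j, a (j + 1) - a j ≤ M * (a j - a (j - 1)) ∧ a j - a (j - 1) ≤ M * (a (j + 1) - a j))
    (hb : ∀ q, b (q + 1) - b q ≤ δ) (j : ℤ) : a (j + 1) - a j ≤ M / (M + 1) * δ := by
  rw [← mul_div_right_comm, le_div_iff₀ (by linarith)]
  obtain ⟨q, r, rfl, hr0, hrm⟩ : ∃ q r : ℤ, j = m * q + r ∧ 0 ≤ r ∧ r < m :=
    ⟨j / m, j % m, (Int.mul_ediv_add_emod j m).symm, Int.emod_nonneg _ (by omega),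
      Int.emod_lt_of_pos _ (by omega)⟩
  have hparent : a (m * q + m) - a (m * q) ≤ δ := by rw [← mul_add_one, hab, hab]; exact hb q
  -- as `m ≥ 2`, the gap at `j` has a neighbouring gap inside the same parent gap
  by_cases hr : r + 1 < m
  · have hnext := (hadj (m * q + r + 1)).2
    rw [add_sub_cancel_right] at hnext
    have hsum : a (m * q + r + 1 + 1) - a (m * q + r) ≤ δ := by
      linarith [ha (show m * q ≤ m * q + r by omega),
        ha (show m * q + r + 1 + 1 ≤ m * q + m by omega)]
    linarith [mul_le_mul_of_nonneg_left hsum hM]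
  · have hprev := (hadj (m * q + r)).1
    have hsum : a (m * q + r + 1) - a (m * q + r - 1) ≤ δ := by
      linarith [ha (show m * q ≤ m * q + r - 1 by omega),
        ha (show m * q + r + 1 ≤ m * q + m by omega)]
    linarith [mul_le_mul_of_nonneg_left hsum hM]

theorem le_mul_and_le_mul_of_div_mem_Icc {a b M : ℝ} (hM : 0 < M) (hb : 0 < b)
    (h : a / b ∈ Icc (1 / M) M) : a ≤ M * b ∧ b ≤ M * a := by
  rw [mem_Icc, div_le_iff₀ hb, div_le_div_iff₀ hM hb] at h
  constructor <;> linarith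

section InverseBranch

variable {m : ℕ} {g : ℝ → ℝ}

theorem iterate_add_intCast_mul_pow (hg : ∀ y (k : ℤ), g (y + k * m) = g y + k) (n : ℕ) (y : ℝ)
    (k : ℤ) : g^[n] (y + k * m ^ n) = g^[n] y + k := by
  induction n generalizing y k with
  | zero => simp
  | succ n ih =>
    have : y + k * (m : ℝ) ^ (n + 1) = y + ((k * m ^ n : ℤ) : ℝ) * m := by push_cast; ring
    rw [iterate_succ_apply, iterate_succ_apply, this, hg]
    push_cast
    exact ih _ _

theorem iterate_intCast_mul_pow (hg : ∀ y (k : ℤ), g (y + k * m) = g y + k) (hg0 : g 0 = 0)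
    (n : ℕ) (k : ℤ) : g^[n] (k * m ^ n) = k := by
  simpa [iterate_fixed hg0] using iterate_add_intCast_mul_pow hg n 0 k

theorem iterate_add_intCast_mul_pow_eq (hg : ∀ y (k : ℤ), g (y + k * m) = g y + k)
    (hg0 : g 0 = 0) (n k : ℕ) (j : ℤ) : g^[n + k] (j * m ^ k) = g^[n] j := by
  rw [iterate_add_apply, iterate_intCast_mul_pow hg hg0]

theorem iterate_intCast_le_iff (hm : 0 < m) (hg : ∀ y (k : ℤ), g (y + k * m) = g y + k)
    (hg0 : g 0 = 0) (hmono : StrictMono g) {n n' : ℕ} {j j' : ℤ} :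
    g^[n] j ≤ g^[n'] j' ↔ (j : ℝ) / m ^ n ≤ j' / m ^ n' := by
  rw [← iterate_add_intCast_mul_pow_eq hg hg0 n n', ← iterate_add_intCast_mul_pow_eq hg hg0 n' n,
    add_comm n' n, (hmono.iterate _).le_iff_le, div_le_div_iff₀ (by positivity) (by positivity)]

theorem iterate_natCast_mem_Icc (hg : ∀ y (k : ℤ), g (y + k * m) = g y + k) (hg0 : g 0 = 0)
    (hmono : Monotone g) {n j : ℕ} (hj : j ≤ m ^ n) : g^[n] j ∈ Icc 0 1 := by
  have hgn : Monotone g^[n] := hmono.iterate n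
  constructor
  · calc (0 : ℝ) = g^[n] 0 := (iterate_fixed hg0 n).symm
      _ ≤ g^[n] j := hgn j.cast_nonneg
  · calc g^[n] j ≤ g^[n] ((1 : ℤ) * m ^ n) := hgn (by rw [Int.cast_one, one_mul]; exact_mod_cast hj)
      _ = 1 := by exact_mod_cast iterate_intCast_mul_pow hg hg0 n 1

theorem iterate_gap_le_pow (hm : 1 < m) (hg : ∀ y (k : ℤ), g (y + k * m) = g y + k)
    (hg0 : g 0 = 0) (hmono : Monotone g) {M : ℝ} (hM : 0 ≤ M)
    (hadj : ∀ n, 1 ≤ n → ∀ x : ℝ, g^[n] (x + 1) - g^[n] x ≤ M * (g^[n] x - g^[n] (x - 1)) ∧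
      g^[n] x - g^[n] (x - 1) ≤ M * (g^[n] (x + 1) - g^[n] x))
    (n : ℕ) (j : ℤ) : g^[n] (j + 1) - g^[n] j ≤ (M / (M + 1)) ^ n := by
  induction n generalizing j with
  | zero => simp
  | succ n ih =>
    have hab (q : ℤ) : g^[n + 1] ((m * q : ℤ) : ℝ) = g^[n] q := by
      simpa [mul_comm] using iterate_add_intCast_mul_pow_eq hg hg0 n 1 q
    have := gap_le_mul_of_refinement (a := fun j : ℤ => g^[n + 1] j) (b := fun q : ℤ => g^[n] q)
      hm hM (fun _ _ h => hmono.iterate _ (Int.cast_le.2 h)) hab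
      (fun j => by simpa using hadj (n + 1) (by omega) j) (fun q => by simpa using ih q) j
    rw [pow_succ, mul_comm]
    simpa using this

theorem denseRange_iterate_intCast (hg : ∀ y (k : ℤ), g (y + k * m) = g y + k) (hg0 : g 0 = 0)
    (hmono : Monotone g) {r : ℝ} (hr : r < 1)
    (hgap : ∀ n (j : ℤ), g^[n] (j + 1) - g^[n] j ≤ r ^ n) :
    DenseRange fun i : ℕ × ℤ => g^[i.1] i.2 := by
  refine dense_of_exists_between fun u v huv => ?_
  obtain ⟨n, hn⟩ := exists_pow_lt_of_lt_one (sub_pos.2 huv) hr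
  have hvalue (k : ℤ) : g^[n] ((k * m ^ n : ℤ) : ℝ) = k := by
    push_cast
    exact iterate_intCast_mul_pow hg hg0 n k
  obtain ⟨j, huj, hjv⟩ := Monotone.exists_lt_le_add (a := fun j : ℤ => g^[n] j)
    (fun _ _ h => hmono.iterate _ (Int.cast_le.2 h))
    ⟨⌊u⌋ * m ^ n, by simpa only [hvalue] using Int.floor_le u⟩
    ⟨(⌊u⌋ + 1) * m ^ n, by
      simpa only [hvalue, Int.cast_add, Int.cast_one] using Int.lt_floor_add_one u⟩
    fun j => by simpa using hgap n j
  exact ⟨_, ⟨(n, j), rfl⟩, huj, by linarith⟩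

end InverseBranch

theorem denseRange_intCast_div_pow {m : ℕ} (hm : 1 < m) :
    DenseRange fun i : ℕ × ℤ => (i.2 : ℝ) / m ^ i.1 := by
  have hm0 : (0 : ℝ) < m := by positivity
  have hiter (n : ℕ) (y : ℝ) : (· / (m : ℝ))^[n] y = y / m ^ n := by
    simp only [div_eq_mul_inv, mul_right_iterate_apply, inv_pow]
  have := denseRange_iterate_intCast (g := (· / (m : ℝ))) (fun y k => by field_simp) (zero_div _)
    (fun _ _ h => div_le_div_of_nonneg_right h hm0.le) (r := 1 / m)
    (by rw [div_lt_one hm0]; exact_mod_cast hm)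
    (fun n j => by rw [hiter, hiter, div_sub_div_same, add_sub_cancel_left, one_div_pow])
  simpa only [hiter] using this

theorem exists_orderIso_semiconj_of_gap_le {m : ℕ} (hm : 1 < m) (g : ℝ ≃o ℝ)
    (hg : ∀ y (k : ℤ), g (y + k * m) = g y + k) (hg0 : g 0 = 0) {r : ℝ} (hr : r < 1)
    (hgap : ∀ n (j : ℤ), g^[n] (j + 1) - g^[n] j ≤ r ^ n) :
    ∃ H : ℝ ≃o ℝ, (∀ n (j : ℤ), H (j / m ^ n) = g^[n] j) ∧ (∀ x, H (x + 1) = H x + 1) ∧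
      ∀ x, g (H (m * x)) = H x := by
  have hdense := denseRange_intCast_div_pow hm
  obtain ⟨H, hH⟩ := exists_orderIso_apply_eq_of_denseRange
    (p := fun i : ℕ × ℤ => (i.2 : ℝ) / m ^ i.1) (q := fun i => g^[i.1] i.2)
    (fun _ _ => (iterate_intCast_le_iff (by omega) hg hg0 g.strictMono).symm)
    hdense (denseRange_iterate_intCast hg hg0 g.monotone hr hgap)
  have hHp (n : ℕ) (j : ℤ) : H (j / m ^ n) = g^[n] j := hH (n, j)
  refine ⟨H, hHp, fun x => ?_, fun x => ?_⟩
  · refine congrFun (Continuous.ext_on hdense (f := fun x => H (x + 1)) (g := fun x => H x + 1)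
      (by fun_prop) (by fun_prop) ?_) x
    rintro _ ⟨⟨n, j⟩, rfl⟩
    have : (j : ℝ) / m ^ n + 1 = ((j + m ^ n : ℤ) : ℝ) / m ^ n := by push_cast; field_simp
    simp only [this, hHp]
    simpa using iterate_add_intCast_mul_pow hg n j 1
  · refine congrFun (Continuous.ext_on hdense (f := fun x => g (H (m * x))) (g := fun x => H x)
      (by fun_prop) (by fun_prop) ?_) x
    rintro _ ⟨⟨n, j⟩, rfl⟩
    have : (m : ℝ) * (j / m ^ n) = ((j * m : ℤ) : ℝ) / m ^ n := by push_cast; ring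
    simp only [this, hHp, ← iterate_succ_apply' g]
    simpa using iterate_add_intCast_mul_pow_eq hg hg0 n 1 j

theorem stmt13_general (m : ℕ) (hm : 1 < m) (F : ℝ → ℝ)
    (Fmono : StrictMono F) (Fsurj : Function.Surjective F)
    (F0 : F 0 = 0) (Fcomm : ∀ x : ℝ, F (x + 1) = F x + m)
    (M : ℝ) (hM : 1 ≤ M)
    (hUAA : ∀ n : ℕ, 1 ≤ n → ∀ x y : ℝ, 0 < y →
      1 / M ≤ (Function.invFun (F^[n]) (x + y) - Function.invFun (F^[n]) x) /
              (Function.invFun (F^[n]) x - Function.invFun (F^[n]) (x - y)) ∧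
      (Function.invFun (F^[n]) (x + y) - Function.invFun (F^[n]) x) /
        (Function.invFun (F^[n]) x - Function.invFun (F^[n]) (x - y)) ≤ M) :
    ∃ H : ℝ → ℝ, StrictMono H ∧ Continuous H ∧ Function.Surjective H ∧
      H 0 = 0 ∧ (∀ x : ℝ, H (x + 1) = H x + 1) ∧
      (∀ x : ℝ, H (m * x) = F (H x)) ∧
      (∀ n : ℕ, 1 ≤ n → ∀ j : ℕ, j ≤ m ^ n →
        H ((j : ℝ) / (m : ℝ) ^ n) ∈ Set.Icc (0:ℝ) 1 ∧
        F^[n] (H ((j : ℝ) / (m : ℝ) ^ n)) = j) := by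
  set g := (Fmono.orderIsoOfSurjective F Fsurj).symm
  have hFg (y : ℝ) : F (g y) = y := Fmono.orderIsoOfSurjective_self_symm_apply F Fsurj y
  have hFint (x : ℝ) (k : ℤ) : F (x + k) = F x + k * m := by
    simpa using AddConstMapClass.map_add_int' (⟨F, Fcomm⟩ : AddConstMap ℝ ℝ 1 (m : ℝ)) x k
  have hg (y : ℝ) (k : ℤ) : g (y + k * m) = g y + k :=
    Fmono.injective <| by rw [hFint, hFg, hFg]
  have hg0 : g 0 = 0 := Fmono.injective <| by rw [hFg, F0]
  have hinv (n : ℕ) : invFun F^[n] = g^[n] :=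
    (leftInverse_invFun (Fmono.iterate n).injective).eq_rightInverse (RightInverse.iterate hFg n)
  have hadj (n : ℕ) (hn : 1 ≤ n) (x : ℝ) :=
    le_mul_and_le_mul_of_div_mem_Icc (M := M) (by linarith)
      (sub_pos.2 <| g.strictMono.iterate n (sub_one_lt x))
      (by simpa [hinv] using hUAA n hn x 1 one_pos)
  have hlt : M / (M + 1) < 1 := by rw [div_lt_one (by linarith)]; linarith
  obtain ⟨H, hHp, hH1, hHm⟩ := exists_orderIso_semiconj_of_gap_le hm g hg hg0 hlt
    (iterate_gap_le_pow hm hg hg0 g.monotone (by linarith) hadj)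
  refine ⟨H, H.strictMono, H.continuous, H.surjective, by simpa using hHp 0 0, hH1,
    fun x => by rw [← hHm x, hFg], fun n _ j hj => ?_⟩
  have hHj : H (j / m ^ n) = g^[n] j := by simpa only [Int.cast_natCast] using hHp n j
  rw [hHj]
  exact ⟨iterate_natCast_mem_Icc hg hg0 g.monotone hj, RightInverse.iterate hFg n j⟩

/-- Existence of the conjugacy H with H(0)=0, H(x+1)=H(x)+1 and
H(mx)=F(H(x)), with H(j/m^n) = a_{j,n} where F^n(a_{j,n}) = j, for a UAA circle
endomorphism lift F. -/
theorem stmt13 (m : ℕ) (hm : 1 < m) (F : ℝ → ℝ)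
    (Fmono : StrictMono F) (Fcont : Continuous F) (Fsurj : Function.Surjective F)
    (F0 : F 0 = 0) (Fcomm : ∀ x : ℝ, F (x + 1) = F x + m)
    (M : ℝ) (hM : 1 ≤ M)
    (hUAA : ∀ n : ℕ, 1 ≤ n → ∀ x y : ℝ, 0 < y →
      1 / M ≤ (Function.invFun (F^[n]) (x + y) - Function.invFun (F^[n]) x) /
              (Function.invFun (F^[n]) x - Function.invFun (F^[n]) (x - y)) ∧
      (Function.invFun (F^[n]) (x + y) - Function.invFun (F^[n]) x) /
        (Function.invFun (F^[n]) x - Function.invFun (F^[n]) (x - y)) ≤ M) :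
    ∃ H : ℝ → ℝ, StrictMono H ∧ Continuous H ∧ Function.Surjective H ∧
      H 0 = 0 ∧ (∀ x : ℝ, H (x + 1) = H x + 1) ∧
      (∀ x : ℝ, H (m * x) = F (H x)) ∧
      (∀ n : ℕ, 1 ≤ n → ∀ j : ℕ, j ≤ m ^ n →
        H ((j : ℝ) / (m : ℝ) ^ n) ∈ Set.Icc (0:ℝ) 1 ∧
        F^[n] (H ((j : ℝ) / (m : ℝ) ^ n)) = j) :=
  stmt13_general m hm F Fmono Fsurj F0 Fcomm M hM hUAA
end

section
/- Let F be an increasing homeomorphism of ℝ with F(0)=0 and F(x+1)=F(x)+m (integer m > 1), and suppose there is M ≥ 1 with 1/M ≤ ρ_{F^{−n}}(x,y) ≤ M for all n ≥ 1, x ∈ ℝ, y > 0. Let H be the conjugacy with H(mx) = F(H(x)), H(x+1) = H(x)+1, H(0)=0. Then H is M'-quasisymmetric with M' = 1 + M + M² + ⋯ + M^m; that is, for all c ∈ ℝ, t > 0, 1/M' ≤ (H(c+t)−H(c))/(H(c)−H(c−t)) ≤ M'. -/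
/-- The conjugacy H between P(x)=mx and a UAA map F with constant M is
M'-quasisymmetric with M' = 1 + M + M² + ⋯ + M^m. -/
theorem stmt14 (m : ℕ) (hm : 1 < m) (F : ℝ → ℝ)
    (Fmono : StrictMono F) (Fcont : Continuous F) (Fsurj : Function.Surjective F)
    (F0 : F 0 = 0) (Fcomm : ∀ x : ℝ, F (x + 1) = F x + m)
    (M : ℝ) (hM : 1 ≤ M)
    (hUAA : ∀ n : ℕ, 1 ≤ n → ∀ x y : ℝ, 0 < y →
      1 / M ≤ (Function.invFun (F^[n]) (x + y) - Function.invFun (F^[n]) x) /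
              (Function.invFun (F^[n]) x - Function.invFun (F^[n]) (x - y)) ∧
      (Function.invFun (F^[n]) (x + y) - Function.invFun (F^[n]) x) /
        (Function.invFun (F^[n]) x - Function.invFun (F^[n]) (x - y)) ≤ M)
    (H : ℝ → ℝ) (Hmono : StrictMono H) (Hcont : Continuous H)
    (Hsurj : Function.Surjective H)
    (H0 : H 0 = 0) (Hper : ∀ x : ℝ, H (x + 1) = H x + 1)
    (Hconj : ∀ x : ℝ, H (m * x) = F (H x)) :
    ∀ c t : ℝ, 0 < t →
      1 / (∑ k ∈ Finset.range (m + 1), M ^ k) ≤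
        (H (c + t) - H c) / (H c - H (c - t)) ∧
      (H (c + t) - H c) / (H c - H (c - t)) ≤
        ∑ k ∈ Finset.range (m + 1), M ^ k := by
  intro c t ht
  have hm2 : (2:ℝ) ≤ (m:ℝ) := by exact_mod_cast hm
  have hM0 : (0:ℝ) < M := lt_of_lt_of_le one_pos hM
  set M' : ℝ := ∑ k ∈ Finset.range (m + 1), M ^ k with hM'def
  have hM'ge : (m : ℝ) + 1 ≤ M' := by
    calc (m:ℝ) + 1 = ∑ k ∈ Finset.range (m+1), (1:ℝ) := by
          simp
        _ ≤ M' := Finset.sum_le_sum fun k _ => one_le_pow₀ hM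
  have hM'3 : (3:ℝ) ≤ M' := by linarith
  have hM'pos : (0:ℝ) < M' := by linarith
  have hnum : 0 < H (c + t) - H c := sub_pos.mpr (Hmono (by linarith))
  have hden : 0 < H c - H (c - t) := sub_pos.mpr (Hmono (by linarith))
  -- H commutes with integer translations
  have Hint : ∀ (k : ℕ) (x : ℝ), H (x + k) = H x + k := by
    intro k
    induction k with
    | zero => simp
    | succ k ih =>
      intro x
      have e : (x + ((k:ℝ) + 1)) = (x + k) + 1 := by ring
      push_cast
      rw [e, Hper, ih]
      ring
  -- the iterated conjugacy
  have Hiter : ∀ (n : ℕ) (x : ℝ), H ((m:ℝ) ^ n * x) = F^[n] (H x) := by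
    intro n
    induction n with
    | zero => simp
    | succ n ih =>
      intro x
      have e : (m:ℝ) ^ (n+1) * x = (m:ℝ) * ((m:ℝ) ^ n * x) := by ring
      rw [e, Hconj, ih, Function.iterate_succ_apply']
  -- key quasisymmetry at scale m^{-n}
  have key : ∀ n : ℕ, 1 ≤ n → ∀ u : ℝ,
      H (u + ((m:ℝ) ^ n)⁻¹) - H u ≤ M * (H u - H (u - ((m:ℝ) ^ n)⁻¹)) ∧
      H u - H (u - ((m:ℝ) ^ n)⁻¹) ≤ M * (H (u + ((m:ℝ) ^ n)⁻¹) - H u) := by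
    intro n hn u
    set ε : ℝ := ((m:ℝ) ^ n)⁻¹ with hεdef
    have hmpow : (0:ℝ) < (m:ℝ) ^ n := by positivity
    have hε : 0 < ε := by positivity
    have hεm : (m:ℝ) ^ n * ε = 1 := mul_inv_cancel₀ hmpow.ne'
    have inj : Function.Injective (F^[n]) := (Fmono.iterate n).injective
    have hinv : ∀ w : ℝ, Function.invFun (F^[n]) (F^[n] w) = w :=
      fun w => Function.leftInverse_invFun inj w
    have eq_plus : H ((m:ℝ) ^ n * u) + 1 = F^[n] (H (u + ε)) := by
      rw [← Hper, ← Hiter]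
      congr 1
      rw [mul_add, hεm]
    have eq_minus : H ((m:ℝ) ^ n * u) - 1 = F^[n] (H (u - ε)) := by
      have e2 : H ((m:ℝ) ^ n * u - 1) = H ((m:ℝ) ^ n * u) - 1 := by
        have h := Hper ((m:ℝ) ^ n * u - 1)
        have e : (m:ℝ) ^ n * u - 1 + 1 = (m:ℝ) ^ n * u := by ring
        rw [e] at h
        linarith
      rw [← e2, ← Hiter]
      congr 1
      rw [mul_sub, hεm]
    obtain ⟨h1, h2⟩ := hUAA n hn (H ((m:ℝ) ^ n * u)) 1 one_pos
    rw [eq_plus, eq_minus, show H ((m:ℝ) ^ n * u) = F^[n] (H u) from Hiter n u,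
      hinv, hinv, hinv] at h1 h2
    have hd : 0 < H u - H (u - ε) := sub_pos.mpr (Hmono (by linarith))
    have hn2 : 0 < H (u + ε) - H u := sub_pos.mpr (Hmono (by linarith))
    constructor
    · have := (div_le_iff₀ hd).mp h2
      linarith
    · have := (div_le_div_iff₀ hM0 hd).mp h1
      linarith
  -- the chain argument at a suitable scale
  have main : ∀ ε : ℝ, 0 < ε →
      (∀ u : ℝ, H (u + ε) - H u ≤ M * (H u - H (u - ε))) →
      (∀ u : ℝ, H u - H (u - ε) ≤ M * (H (u + ε) - H u)) →
      ε ≤ t → t ≤ m * ε →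
      H (c + t) - H c ≤ M' * (H c - H (c - t)) ∧
      H c - H (c - t) ≤ M' * (H (c + t) - H c) := by
    intro ε hε qs1 qs2 htl htu
    set a : ℕ → ℝ := fun j => H (c + j * ε) with ha
    set b : ℕ → ℝ := fun j => H (c - j * ε) with hb
    have ha0 : a 0 = H c := by simp [ha]
    have hb0 : b 0 = H c := by simp [hb]
    have hb1 : b 1 = H (c - ε) := by simp [hb]
    have ha1 : a 1 = H (c + ε) := by simp [ha]
    have hU : ∀ j : ℕ, a (j+1) - a j ≤ M ^ (j+1) * (b 0 - b 1) := by
      intro j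
      induction j with
      | zero =>
        have h := qs1 c
        rw [ha0, hb0, hb1, ha1]
        simpa using h
      | succ j ih =>
        have h := qs1 (c + (j+1 : ℕ) * ε)
        have e1 : c + ((j+1:ℕ):ℝ) * ε + ε = c + ((j+2:ℕ):ℝ) * ε := by push_cast; ring
        have e2 : c + ((j+1:ℕ):ℝ) * ε - ε = c + ((j:ℕ):ℝ) * ε := by push_cast; ring
        rw [e1, e2] at h
        have hstep : a (j+2) - a (j+1) ≤ M * (a (j+1) - a j) := h
        have hMj : M * (a (j+1) - a j) ≤ M * (M ^ (j+1) * (b 0 - b 1)) :=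
          mul_le_mul_of_nonneg_left ih (le_of_lt hM0)
        calc a (j+2) - a (j+1) ≤ M * (M ^ (j+1) * (b 0 - b 1)) := le_trans hstep hMj
          _ = M ^ (j+2) * (b 0 - b 1) := by ring
    have hD : ∀ j : ℕ, b j - b (j+1) ≤ M ^ (j+1) * (a 1 - a 0) := by
      intro j
      induction j with
      | zero =>
        have h := qs2 c
        rw [ha0, hb0, hb1, ha1]
        simpa using h
      | succ j ih =>
        have h := qs2 (c - (j+1 : ℕ) * ε)
        have e1 : c - ((j+1:ℕ):ℝ) * ε - ε = c - ((j+2:ℕ):ℝ) * ε := by push_cast; ring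
        have e2 : c - ((j+1:ℕ):ℝ) * ε + ε = c - ((j:ℕ):ℝ) * ε := by push_cast; ring
        rw [e1, e2] at h
        have hstep : b (j+1) - b (j+2) ≤ M * (b j - b (j+1)) := h
        have hMj : M * (b j - b (j+1)) ≤ M * (M ^ (j+1) * (a 1 - a 0)) :=
          mul_le_mul_of_nonneg_left ih (le_of_lt hM0)
        calc b (j+1) - b (j+2) ≤ M * (M ^ (j+1) * (a 1 - a 0)) := le_trans hstep hMj
          _ = M ^ (j+2) * (a 1 - a 0) := by ring
    have hsumM : (∑ j ∈ Finset.range m, M ^ (j+1)) + 1 = M' := by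
      rw [hM'def, Finset.sum_range_succ' (fun k => M ^ k) m]
      simp
    have hd1 : 0 < b 0 - b 1 := by
      rw [hb0, hb1]; exact sub_pos.mpr (Hmono (by linarith))
    have hn1 : 0 < a 1 - a 0 := by
      rw [ha0, ha1]; exact sub_pos.mpr (Hmono (by linarith))
    have hd1t : b 0 - b 1 ≤ H c - H (c - t) := by
      rw [hb0, hb1]
      have : H (c - t) ≤ H (c - ε) := Hmono.le_iff_le.mpr (by linarith)
      linarith
    have hn1t : a 1 - a 0 ≤ H (c + t) - H c := by
      rw [ha0, ha1]
      have : H (c + ε) ≤ H (c + t) := Hmono.le_iff_le.mpr (by linarith)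
      linarith
    constructor
    · -- upper
      have h1 : H (c + t) ≤ a m := by
        rw [ha]
        exact Hmono.le_iff_le.mpr (by linarith)
      have h2 : a m - a 0 = ∑ j ∈ Finset.range m, (a (j+1) - a j) :=
        (Finset.sum_range_sub a m).symm
      have h3 : ∑ j ∈ Finset.range m, (a (j+1) - a j) ≤
          ∑ j ∈ Finset.range m, M ^ (j+1) * (b 0 - b 1) :=
        Finset.sum_le_sum fun j _ => hU j
      have h4 : ∑ j ∈ Finset.range m, M ^ (j+1) * (b 0 - b 1) =
          (∑ j ∈ Finset.range m, M ^ (j+1)) * (b 0 - b 1) :=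
        (Finset.sum_mul _ _ _).symm
      have h5 : (∑ j ∈ Finset.range m, M ^ (j+1)) * (b 0 - b 1) ≤ M' * (b 0 - b 1) := by
        apply mul_le_mul_of_nonneg_right _ (le_of_lt hd1)
        linarith
      have h6 : M' * (b 0 - b 1) ≤ M' * (H c - H (c - t)) :=
        mul_le_mul_of_nonneg_left hd1t (le_of_lt hM'pos)
      linarith [ha0]
    · -- lower
      have h1 : b m ≤ H (c - t) := by
        rw [hb]
        exact Hmono.le_iff_le.mpr (by linarith)
      have h2 : b 0 - b m = ∑ j ∈ Finset.range m, (b j - b (j+1)) :=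
        (Finset.sum_range_sub' b m).symm
      have h3 : ∑ j ∈ Finset.range m, (b j - b (j+1)) ≤
          ∑ j ∈ Finset.range m, M ^ (j+1) * (a 1 - a 0) :=
        Finset.sum_le_sum fun j _ => hD j
      have h4 : ∑ j ∈ Finset.range m, M ^ (j+1) * (a 1 - a 0) =
          (∑ j ∈ Finset.range m, M ^ (j+1)) * (a 1 - a 0) :=
        (Finset.sum_mul _ _ _).symm
      have h5 : (∑ j ∈ Finset.range m, M ^ (j+1)) * (a 1 - a 0) ≤ M' * (a 1 - a 0) := by
        apply mul_le_mul_of_nonneg_right _ (le_of_lt hn1)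
        linarith
      have h6 : M' * (a 1 - a 0) ≤ M' * (H (c + t) - H c) :=
        mul_le_mul_of_nonneg_left hn1t (le_of_lt hM'pos)
      linarith [hb0]
  -- produce the two multiplicative bounds
  have bound : H (c + t) - H c ≤ M' * (H c - H (c - t)) ∧
      H c - H (c - t) ≤ M' * (H (c + t) - H c) := by
    by_cases htc : t < 1
    · -- choose the right scale
      classical
      have hm1 : (1:ℝ) < (m:ℝ) := by linarith
      have hex : ∃ n : ℕ, 1 ≤ (m:ℝ) ^ n * t := by
        obtain ⟨n, hn⟩ := pow_unbounded_of_one_lt (1/t) hm1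
        exact ⟨n, by
          rw [div_lt_iff₀ ht] at hn
          linarith⟩
      set n := Nat.find hex with hndef
      have hspec : 1 ≤ (m:ℝ) ^ n * t := Nat.find_spec hex
      have hn1 : 1 ≤ n := by
        rcases Nat.eq_zero_or_pos n with h | h
        · exfalso
          have := hspec
          rw [h] at this
          simp at this
          linarith
        · exact h
      have hmin : ¬ (1 ≤ (m:ℝ) ^ (n-1) * t) := Nat.find_min hex (by omega)
      push_neg at hmin
      have hup : (m:ℝ) ^ n * t ≤ m := by
        have e : (m:ℝ) ^ n = (m:ℝ) * (m:ℝ) ^ (n-1) := by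
          rw [← pow_succ']
          congr 1
          omega
        rw [e]
        have hm0' : (0:ℝ) < m := by linarith
        nlinarith
      set ε : ℝ := ((m:ℝ) ^ n)⁻¹ with hεdef
      have hmpow : (0:ℝ) < (m:ℝ) ^ n := by positivity
      have hε : 0 < ε := by positivity
      have e : ((m:ℝ) ^ n * t) * ε = t := by
        rw [hεdef]
        field_simp
      have htl : ε ≤ t := by
        have h := mul_le_mul_of_nonneg_right hspec hε.le
        rw [e, one_mul] at h
        exact h
      have htu : t ≤ m * ε := by
        have h := mul_le_mul_of_nonneg_right hup hε.le
        rw [e] at h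
        exact h
      exact main ε hε (fun u => (key n hn1 u).1) (fun u => (key n hn1 u).2) htl htu
    · -- large t : integer translations give everything
      push_neg at htc
      set k : ℕ := ⌊t⌋₊ with hkdef
      have hk1 : 1 ≤ k := Nat.le_floor (by exact_mod_cast htc)
      have hk1' : (1:ℝ) ≤ (k:ℝ) := by exact_mod_cast hk1
      have hkle : (k:ℝ) ≤ t := Nat.floor_le (le_of_lt ht)
      have hklt : t < (k:ℝ) + 1 := Nat.lt_floor_add_one t
      have hHk : H (c + k) = H c + k := Hint k c
      have hHk1 : H (c + (k+1:ℕ)) = H c + (k+1:ℕ) := Hint (k+1) c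
      have hHmk : H (c - k) = H c - k := by
        have := Hint k (c - k)
        have e : c - (k:ℝ) + (k:ℝ) = c := by ring
        rw [e] at this
        linarith
      have hHmk1 : H (c - (k+1:ℕ)) = H c - (k+1:ℕ) := by
        have := Hint (k+1) (c - (k+1:ℕ))
        have e : c - ((k+1:ℕ):ℝ) + ((k+1:ℕ):ℝ) = c := by ring
        rw [e] at this
        linarith
      have hnum_ub : H (c + t) - H c ≤ (k:ℝ) + 1 := by
        have : H (c + t) ≤ H (c + (k+1:ℕ)) := Hmono.le_iff_le.mpr (by push_cast; linarith)
        rw [hHk1] at this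
        push_cast at this
        linarith
      have hnum_lb : (k:ℝ) ≤ H (c + t) - H c := by
        have : H (c + k) ≤ H (c + t) := Hmono.le_iff_le.mpr (by linarith)
        rw [hHk] at this
        linarith
      have hden_ub : H c - H (c - t) ≤ (k:ℝ) + 1 := by
        have : H (c - (k+1:ℕ)) ≤ H (c - t) := Hmono.le_iff_le.mpr (by push_cast; linarith)
        rw [hHmk1] at this
        push_cast at this
        linarith
      have hden_lb : (k:ℝ) ≤ H c - H (c - t) := by
        have : H (c - t) ≤ H (c - k) := Hmono.le_iff_le.mpr (by linarith)
        rw [hHmk] at this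
        linarith
      constructor
      · nlinarith
      · nlinarith
  constructor
  · rw [div_le_div_iff₀ hM'pos hden]
    nlinarith [bound.2]
  · rw [div_le_iff₀ hden]
    exact bound.1
end

section
/- Let F with F(0)=0, F(x+1)=F(x)+m (m > 1 an integer) be an increasing homeomorphism of ℝ, and H, H' two increasing homeomorphisms of ℝ with H(0)=H'(0)=0, H(x+1)=H(x)+1, H'(x+1)=H'(x)+1, and H(mx)=F(H(x)), H'(mx)=F(H'(x)) for all x. Then H = H'. -/
/-!
Both `H` and `H'` fix the integers, and the conjugacy equation `H (m x) = F (H x)` with `F`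
injective propagates agreement from `k / m ^ n` to `k / m ^ (n + 1)`. So `H` and `H'` agree on the
`m`-adic rationals, which are dense; being continuous, they are equal.
-/

theorem map_intCast_of_map_add_one {R S : Type*} [AddGroupWithOne R] [AddGroupWithOne S]
    {H : R → S} (h0 : H 0 = 0) (h1 : ∀ x, H (x + 1) = H x + 1) (k : ℤ) : H k = k := by
  induction k using Int.induction_on with
  | zero => simpa using h0
  | succ n ih => push_cast at ih ⊢; rw [h1, ih]
  | pred n ih =>
    have h := h1 (-(n : R) - 1)
    push_cast at ih ⊢
    rw [sub_add_cancel, ih] at h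
    exact (eq_sub_of_add_eq h.symm)

theorem dense_range_intCast_div_pow {r : ℝ} (hr : 1 < r) :
    Dense (Set.range fun p : ℤ × ℕ => (p.1 : ℝ) / r ^ p.2) := by
  refine dense_of_exists_between fun a b hab => ?_
  obtain ⟨n, hn⟩ := pow_unbounded_of_one_lt (b - a)⁻¹ hr
  have hrn : 0 < r ^ n := pow_pos (zero_lt_one.trans hr) n
  have hgap : 1 < r ^ n * (b - a) := by
    rwa [inv_lt_iff_one_lt_mul₀ (sub_pos.2 hab)] at hn
  refine ⟨_, ⟨(⌊a * r ^ n⌋ + 1, n), rfl⟩, ?_, ?_⟩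
  · rw [lt_div_iff₀ hrn]
    push_cast
    exact Int.lt_floor_add_one _
  · rw [div_lt_iff₀ hrn]
    push_cast
    linarith [Int.floor_le (a * r ^ n)]

theorem eq_of_semiconj_mul_of_map_add_one {r : ℝ} (hr : 1 < r) {F H H' : ℝ → ℝ}
    (hF : Function.Injective F) (hH : Continuous H) (hH' : Continuous H')
    (h0 : H 0 = 0) (h0' : H' 0 = 0)
    (h1 : ∀ x, H (x + 1) = H x + 1) (h1' : ∀ x, H' (x + 1) = H' x + 1)
    (hconj : ∀ x, H (r * x) = F (H x)) (hconj' : ∀ x, H' (r * x) = F (H' x)) :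
    H = H' := by
  have hr0 : r ≠ 0 := (zero_lt_one.trans hr).ne'
  have agree : ∀ n : ℕ, ∀ k : ℤ, H (k / r ^ n) = H' (k / r ^ n) := by
    intro n
    induction n with
    | zero =>
      intro k
      simp [map_intCast_of_map_add_one h0 h1, map_intCast_of_map_add_one h0' h1']
    | succ n ih =>
      intro k
      apply hF
      rw [← hconj, ← hconj', pow_succ, div_mul_eq_div_div, mul_div_cancel₀ _ hr0, ih]
  refine Continuous.ext_on (dense_range_intCast_div_pow hr) hH hH' ?_
  rintro _ ⟨⟨k, n⟩, rfl⟩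
  exact agree n k

theorem stmt15_general (m : ℕ) (hm : 1 < m) (F : ℝ → ℝ)
    (Fmono : StrictMono F)
    (H H' : ℝ → ℝ)
    (Hcont : Continuous H)
    (H'cont : Continuous H')
    (H0 : H 0 = 0) (H'0 : H' 0 = 0)
    (Hper : ∀ x : ℝ, H (x + 1) = H x + 1) (H'per : ∀ x : ℝ, H' (x + 1) = H' x + 1)
    (Hconj : ∀ x : ℝ, H (m * x) = F (H x)) (H'conj : ∀ x : ℝ, H' (m * x) = F (H' x)) :
    H = H' :=
  eq_of_semiconj_mul_of_map_add_one (by exact_mod_cast hm) Fmono.injective Hcont H'cont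
    H0 H'0 Hper H'per Hconj H'conj

/-- Uniqueness of the conjugacy: two increasing homeomorphisms H, H' of ℝ
fixing 0, commuting with x ↦ x+1 and conjugating P(x)=mx to F must coincide. -/
theorem stmt15 (m : ℕ) (hm : 1 < m) (F : ℝ → ℝ)
    (Fmono : StrictMono F) (Fcont : Continuous F) (Fsurj : Function.Surjective F)
    (F0 : F 0 = 0) (Fcomm : ∀ x : ℝ, F (x + 1) = F x + m)
    (H H' : ℝ → ℝ)
    (Hmono : StrictMono H) (Hcont : Continuous H) (Hsurj : Function.Surjective H)
    (H'mono : StrictMono H') (H'cont : Continuous H') (H'surj : Function.Surjective H')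
    (H0 : H 0 = 0) (H'0 : H' 0 = 0)
    (Hper : ∀ x : ℝ, H (x + 1) = H x + 1) (H'per : ∀ x : ℝ, H' (x + 1) = H' x + 1)
    (Hconj : ∀ x : ℝ, H (m * x) = F (H x)) (H'conj : ∀ x : ℝ, H' (m * x) = F (H' x)) :
    H = H' :=
  stmt15_general m hm F Fmono H H' Hcont H'cont H0 H'0 Hper H'per Hconj H'conj
end
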